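/- arXiv:nlin/0612002 — 2 statements merged into one kernel-verified Lean document; each statement's English description precedes it below -/
import Mathlib

section
/- Let p, q, β : ℝ → ℝ be smooth with q(x) ≠ 0, λ ≠ 0, and define α = (1/(2q))(-β_x/λ + 2βp). Suppose r is defined on the set where p² + qr = 0 (i.e., r = -p²/q), γ = -β_{xx}/(2λ²q²) + (β_x/(λq²))(p + q_x/(2λq)) + β(p_x/(λq²) - q_x p/(λq³) + r/q + 1/(λq)), and suppose α² + βγ = F for a constant F with β nowhere zero. Then β satisfies 2qβ_{xx}β - qβ_x² - 2q_xββ_x + 4(q_x p - q p_x - q²)β²λ - 4q(p² + qr)λ²β² + 4q³Fλ² = 0. -/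
/-- Reduction of the Lax kernel equations to a single second-order ODE for `β`. -/
theorem beta_second_order_ode
    (p q r α β γ : ℝ → ℝ) (l F : ℝ)
    (hp : ContDiff ℝ (⊤ : ℕ∞) p) (hq : ContDiff ℝ (⊤ : ℕ∞) q) (hβ : ContDiff ℝ (⊤ : ℕ∞) β)
    (hq_ne : ∀ x, q x ≠ 0) (hl : l ≠ 0)
    (hβ_ne : ∀ x, β x ≠ 0)
    (hα : ∀ x, α x = (1 / (2 * q x)) * (-(deriv β x) / l + 2 * β x * p x))
    (hr : ∀ x, p x ^ 2 + q x * r x = 0)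
    (hγ : ∀ x, γ x =
      -(deriv (deriv β) x) / (2 * l ^ 2 * q x ^ 2)
      + (deriv β x / (l * q x ^ 2)) * (p x + deriv q x / (2 * l * q x))
      + β x * (deriv p x / (l * q x ^ 2) - deriv q x * p x / (l * q x ^ 3)
          + r x / q x + 1 / (l * q x)))
    (hF : ∀ x, α x ^ 2 + β x * γ x = F) :
    ∀ x,
      2 * q x * deriv (deriv β) x * β x - q x * (deriv β x) ^ 2
      - 2 * deriv q x * β x * deriv β x
      + 4 * (deriv q x * p x - q x * deriv p x - q x ^ 2) * β x ^ 2 * l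
      - 4 * q x * (p x ^ 2 + q x * r x) * l ^ 2 * β x ^ 2
      + 4 * q x ^ 3 * F * l ^ 2 = 0 := by
  intro x
  have h := hF x
  rw [hα x, hγ x] at h
  have hq' := hq_ne x
  field_simp at h
  have hne : (4 * l ^ 7 * q x ^ 11 : ℝ) ≠ 0 := by positivity
  have h2 : (4 * l ^ 7 * q x ^ 11) *
      (2 * q x * deriv (deriv β) x * β x - q x * (deriv β x) ^ 2
      - 2 * deriv q x * β x * deriv β x
      + 4 * (deriv q x * p x - q x * deriv p x - q x ^ 2) * β x ^ 2 * l
      - 4 * q x * (p x ^ 2 + q x * r x) * l ^ 2 * β x ^ 2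
      + 4 * q x ^ 3 * F * l ^ 2) = 0 := by linear_combination (-4 * l ^ 7 * q x ^ 11) * h
  exact (mul_eq_zero.mp h2).resolve_left hne
end

section
/- Let q, β : ℝ → ℝ be smooth with q > 0, β > 0, λ > 0, p smooth, and suppose β satisfies 2qβ_{xx}β - qβ_x² - 2q_xββ_x + 4(q_x p - q p_x - q²)β²λ + 4q³λ³ = 0. Then h := qλ^{3/2}/β + β_x/(2β) satisfies the Riccati equation h_x + h² - (q_x/q)h = (p_x + q - (q_x/q)p)λ. -/
/-- The substitution `h = qλ^{3/2}/β + β_x/(2β)` turns the equation for `β`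
into a Riccati-type equation. -/
theorem beta_to_riccati
    (p q β : ℝ → ℝ) (l : ℝ)
    (hp : ContDiff ℝ (⊤ : ℕ∞) p) (hq : ContDiff ℝ (⊤ : ℕ∞) q) (hβ : ContDiff ℝ (⊤ : ℕ∞) β)
    (hq_pos : ∀ x, q x > 0) (hβ_pos : ∀ x, β x > 0) (hl : l > 0)
    (hbeta : ∀ x,
      2 * q x * deriv (deriv β) x * β x - q x * (deriv β x) ^ 2
      - 2 * deriv q x * β x * deriv β x
      + 4 * (deriv q x * p x - q x * deriv p x - q x ^ 2) * β x ^ 2 * l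
      + 4 * q x ^ 3 * l ^ 3 = 0)
    (h : ℝ → ℝ)
    (hh : ∀ x, h x = q x * l ^ ((3 : ℝ) / 2) / β x + deriv β x / (2 * β x)) :
    ∀ x, deriv h x + h x ^ 2 - (deriv q x / q x) * h x
      = (deriv p x + q x - (deriv q x / q x) * p x) * l := by
  have hc : (l ^ ((3 : ℝ) / 2)) ^ 2 = l ^ 3 := by
    rw [← Real.rpow_natCast (l ^ ((3 : ℝ) / 2)) 2, ← Real.rpow_mul hl.le,
      ← Real.rpow_natCast l 3]
    norm_num
  set c := l ^ ((3 : ℝ) / 2) with hcdef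
  have hβd : Differentiable ℝ β := hβ.differentiable (by simp)
  have hbInf : ContDiff ℝ ((⊤ : ℕ∞) : WithTop ℕ∞) β := hβ.of_le (by simp)
  have hβ'd : Differentiable ℝ (deriv β) :=
    ((contDiff_infty_iff_deriv.mp hbInf).2).differentiable (by simp)
  have hqd : Differentiable ℝ q := hq.differentiable (by simp)
  have hfun : h = fun x => q x * c / β x + deriv β x / (2 * β x) := funext hh
  intro x
  have hβne : β x ≠ 0 := (hβ_pos x).ne'
  have h2βne : 2 * β x ≠ 0 := by positivity
  have hqne : q x ≠ 0 := (hq_pos x).ne'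
  have d1 : HasDerivAt (fun x => q x * c / β x)
      ((deriv q x * c * β x - q x * c * deriv β x) / β x ^ 2) x :=
    (((hqd x).hasDerivAt.mul_const c).div (hβd x).hasDerivAt hβne)
  have d2 : HasDerivAt (fun x => deriv β x / (2 * β x))
      ((deriv (deriv β) x * (2 * β x) - deriv β x * (2 * deriv β x)) / (2 * β x) ^ 2) x :=
    (hβ'd x).hasDerivAt.div ((hβd x).hasDerivAt.const_mul 2) h2βne
  have dh : deriv h x = (deriv q x * c * β x - q x * c * deriv β x) / β x ^ 2
      + (deriv (deriv β) x * (2 * β x) - deriv β x * (2 * deriv β x)) / (2 * β x) ^ 2 := by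
    rw [hfun]; exact (d1.add d2).deriv
  rw [dh, hh x]
  have hb := hbeta x
  field_simp
  linear_combination hb + (4 * q x ^ 3) * hc
end
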